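/- arXiv:2002.08825 — 5 statements merged into one kernel-verified Lean document; each statement's English description precedes it below -/
import Mathlib

section
/- Let (G,T) be a terminal network and let G' be a finite simple undirected graph with T ⊆ V(G'). Then G' is a multicut-mimicking network for (G,T) — that is, for every set of cut requests R ⊆ {{u,v} : u,v ∈ T, u≠v}, the minimum cardinality of a multicut for R is the same in G and in G' — if and only if for every partition 𝒯 of T, the minimum cardinality of a multiway cut for 𝒯 is the same in G and in G'. -/
open Finset

variable {V : Type}

/-- Total capacity of a terminal set: sum of degrees. -/
def capacity [Fintype V] (G : SimpleGraph V) [DecidableRel G.Adj] (T : Finset V) : ℕ :=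
  ∑ t ∈ T, G.degree t

/-- `P` is a partition of the set `T` into nonempty parts. -/
def IsPartitionOn (T : Set V) (P : Set (Set V)) : Prop :=
  (∀ p ∈ P, p.Nonempty ∧ p ⊆ T) ∧ ∀ t ∈ T, ∃! p, p ∈ P ∧ t ∈ p

/-- `X` is a multiway cut for the partition `P` in `G`: no component of `G - X`
contains terminals from two distinct parts. -/
def IsMultiwayCut (G : SimpleGraph V) (P : Set (Set V)) (X : Finset (Sym2 V)) : Prop :=
  ↑X ⊆ G.edgeSet ∧ ∀ u v : V, ∀ p ∈ P, ∀ q ∈ P, u ∈ p → v ∈ q →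
    (G.deleteEdges ↑X).Reachable u v → p = q

def IsMinMultiwayCut (G : SimpleGraph V) (P : Set (Set V)) (X : Finset (Sym2 V)) : Prop :=
  IsMultiwayCut G P X ∧ ∀ Y : Finset (Sym2 V), IsMultiwayCut G P Y → X.card ≤ Y.card

/-- `R` is a set of cut requests over `T`: unordered pairs of distinct terminals. -/
def CutRequests (T : Set V) (R : Set (Sym2 V)) : Prop :=
  ∀ r ∈ R, ¬ r.IsDiag ∧ ∀ v ∈ r, v ∈ T

/-- `X` is a multicut for the requests `R` in `G`. -/
def IsMulticut (G : SimpleGraph V) (R : Set (Sym2 V)) (X : Finset (Sym2 V)) : Prop :=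
  ↑X ⊆ G.edgeSet ∧ ∀ u v : V, s(u, v) ∈ R → ¬ (G.deleteEdges ↑X).Reachable u v

def IsMinMulticut (G : SimpleGraph V) (R : Set (Sym2 V)) (X : Finset (Sym2 V)) : Prop :=
  IsMulticut G R X ∧ ∀ Y : Finset (Sym2 V), IsMulticut G R Y → X.card ≤ Y.card

/-- An edge is essential for `(G,T)` if for some set of cut requests over `T`,
every minimum multicut contains it. -/
def Essential (G : SimpleGraph V) (T : Set V) (e : Sym2 V) : Prop :=
  ∃ R : Set (Sym2 V), CutRequests T R ∧ ∀ X : Finset (Sym2 V), IsMinMulticut G R X → e ∈ X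

/-- The edge boundary of `S`: edges with exactly one endpoint in `S`. -/
def edgeBoundary [Fintype V] [DecidableEq V] (G : SimpleGraph V) [DecidableRel G.Adj]
    (S : Finset V) : Finset (Sym2 V) :=
  G.edgeFinset.filter (fun e => ∃ u v : V, e = s(u, v) ∧ u ∈ S ∧ v ∉ S)

/-- `cap_T(S) = cap_G(T ∩ S) + δ_G(S)`. -/
def capT [Fintype V] [DecidableEq V] (G : SimpleGraph V) [DecidableRel G.Adj]
    (T S : Finset V) : ℕ :=
  capacity G (T ∩ S) + (edgeBoundary G S).card

/-- `X` is an `(A,B)`-edge cut in `G`. -/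
def IsEdgeCut (G : SimpleGraph V) (A B : Finset V) (X : Finset (Sym2 V)) : Prop :=
  ↑X ⊆ G.edgeSet ∧ ∀ a ∈ A, ∀ b ∈ B, ¬ (G.deleteEdges ↑X).Reachable a b

def IsMinEdgeCut (G : SimpleGraph V) (A B : Finset V) (X : Finset (Sym2 V)) : Prop :=
  IsEdgeCut G A B X ∧ ∀ Y : Finset (Sym2 V), IsEdgeCut G A B Y → X.card ≤ Y.card


/-- The closed neighborhood `N_G[S]`. -/
def closedNbhd (G : SimpleGraph V) (S : Set V) : Set V :=
  S ∪ {v | ∃ u ∈ S, G.Adj u v}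

/-- The (exterior) open neighborhood `N_G(S)`. -/
def extNbhd [Fintype V] [DecidableEq V] (G : SimpleGraph V) [DecidableRel G.Adj]
    (S : Finset V) : Finset V :=
  Finset.univ.filter (fun v => v ∉ S ∧ ∃ u ∈ S, G.Adj u v)

/-- The graph `G_S`: the edges of `G` with at least one endpoint in `S`
(vertices outside `N_G[S]` are isolated). -/
def recGraph [DecidableEq V] (G : SimpleGraph V) (S : Finset V) : SimpleGraph V where
  Adj u v := G.Adj u v ∧ (u ∈ S ∨ v ∈ S)
  symm := ⟨fun u v h => ⟨h.1.symm, h.2.symm⟩⟩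
  loopless := ⟨fun v h => G.loopless.irrefl v h.1⟩

instance [DecidableEq V] (G : SimpleGraph V) [DecidableRel G.Adj] (S : Finset V) :
    DecidableRel (recGraph G S).Adj :=
  fun u v => inferInstanceAs (Decidable (G.Adj u v ∧ (u ∈ S ∨ v ∈ S)))

/-- The terminal set `T(S) = (T ∩ S) ∪ N_G(S)` of the recursive instance at `S`. -/
def recTerminals [Fintype V] [DecidableEq V] (G : SimpleGraph V) [DecidableRel G.Adj]
    (T S : Finset V) : Finset V :=
  (T ∩ S) ∪ extNbhd G S

/-- An indexed partition `T = T_1 ∪ ... ∪ T_s` of `T` into nonempty disjoint parts. -/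
def IsIndexedPartition [DecidableEq V] (T : Finset V) {s : ℕ} (Tp : Fin s → Finset V) : Prop :=
  (∀ i, (Tp i).Nonempty) ∧ (∀ i j, i ≠ j → Disjoint (Tp i) (Tp j)) ∧
    Finset.univ.biUnion Tp = T

def IsMultiwayCutFam (G : SimpleGraph V) {s : ℕ} (Tp : Fin s → Finset V)
    (X : Finset (Sym2 V)) : Prop :=
  ↑X ⊆ G.edgeSet ∧ ∀ i j : Fin s, i ≠ j → ∀ u ∈ Tp i, ∀ v ∈ Tp j,
    ¬ (G.deleteEdges ↑X).Reachable u v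

/-- The set `E(T,V)` of edges incident to at least one terminal. -/
def terminalEdges [Fintype V] [DecidableEq V] (G : SimpleGraph V) [DecidableRel G.Adj]
    (T : Finset V) : Finset (Sym2 V) :=
  G.edgeFinset.filter (fun e => ∃ t ∈ T, t ∈ e)

/-- Independence of the columns indexed by the finite set `X` in the
linear representation `v`. -/
def FIndep (F : Type) [Field F] {W E : Type} [AddCommGroup W] [Module F W]
    (v : E → W) (X : Finset E) : Prop :=
  LinearIndependent F (fun x : {a // a ∈ X} => v x.1)


variable {τ V' : Type}

/-- The minimum cardinality of a multicut in `G` for the cut requests `R` over the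
terminal type `τ`, where terminals are embedded in `G` via `f`. -/
noncomputable def minMulticutSizeOn (G : SimpleGraph V) (f : τ → V) (R : Set (Sym2 τ)) : ℕ :=
  sInf {n : ℕ | ∃ X : Finset (Sym2 V),
    (↑X ⊆ G.edgeSet ∧
      ∀ a b : τ, s(a, b) ∈ R → ¬ (G.deleteEdges ↑X).Reachable (f a) (f b)) ∧ X.card = n}

/-- The minimum cardinality of a multiway cut in `G` for the partition `P` of the
terminal type `τ`, where terminals are embedded in `G` via `f`. -/
noncomputable def minMultiwayCutSizeOn (G : SimpleGraph V) (f : τ → V) (P : Set (Set τ)) : ℕ :=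
  sInf {n : ℕ | ∃ X : Finset (Sym2 V),
    (↑X ⊆ G.edgeSet ∧
      ∀ a b : τ, ∀ p ∈ P, ∀ q ∈ P, a ∈ p → b ∈ q →
        (G.deleteEdges ↑X).Reachable (f a) (f b) → p = q) ∧ X.card = n}

/-!
A multiway cut for a partition `P` is exactly a multicut for the requests that join two
different parts of `P`. Conversely, a minimum multicut `X` for `R` is a multiway cut for the
partition of the terminals by the components of `G - X`, and every multiway cut for that
partition separates `R` again. Hence the minimum multicut for `R` is the minimum, over the
partitions separating `R`, of the minimum multiway cut.
-/

section Cuts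

variable {G : SimpleGraph V} {f : τ → V} {R : Set (Sym2 τ)} {P : Set (Set τ)}
  {X : Finset (Sym2 V)}

def IsMulticutOn (G : SimpleGraph V) (f : τ → V) (R : Set (Sym2 τ)) (X : Finset (Sym2 V)) :
    Prop :=
  ↑X ⊆ G.edgeSet ∧
    ∀ a b : τ, s(a, b) ∈ R → ¬ (G.deleteEdges ↑X).Reachable (f a) (f b)

def IsMultiwayCutOn (G : SimpleGraph V) (f : τ → V) (P : Set (Set τ)) (X : Finset (Sym2 V)) :
    Prop :=
  ↑X ⊆ G.edgeSet ∧ ∀ a b : τ, ∀ p ∈ P, ∀ q ∈ P, a ∈ p → b ∈ q →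
    (G.deleteEdges ↑X).Reachable (f a) (f b) → p = q

lemma minMulticutSizeOn_eq_sInf :
    minMulticutSizeOn G f R = sInf (Finset.card '' {X | IsMulticutOn G f R X}) :=
  rfl

lemma minMultiwayCutSizeOn_eq_sInf :
    minMultiwayCutSizeOn G f P = sInf (Finset.card '' {X | IsMultiwayCutOn G f P X}) :=
  rfl

lemma minMulticutSizeOn_le (hX : IsMulticutOn G f R X) : minMulticutSizeOn G f R ≤ X.card :=
  Nat.sInf_le ⟨X, hX, rfl⟩

lemma minMultiwayCutSizeOn_le (hX : IsMultiwayCutOn G f P X) :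
    minMultiwayCutSizeOn G f P ≤ X.card :=
  Nat.sInf_le ⟨X, hX, rfl⟩

lemma exists_finset_subset_edgeSet_reachable_eq [Finite V] (G : SimpleGraph V) :
    ∃ X : Finset (Sym2 V), ↑X ⊆ G.edgeSet ∧
      ∀ u v : V, (G.deleteEdges ↑X).Reachable u v → u = v := by
  refine ⟨G.edgeSet.toFinite.toFinset, by simp, fun u v h => ?_⟩
  rwa [Set.Finite.coe_toFinset, SimpleGraph.deleteEdges_edgeSet, sdiff_self,
    SimpleGraph.reachable_bot] at h

lemma exists_isMulticutOn [Finite V] (hf : Function.Injective f)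
    (hR : ∀ r ∈ R, ¬ r.IsDiag) : ∃ X, IsMulticutOn G f R X := by
  obtain ⟨X, hXG, hX⟩ := exists_finset_subset_edgeSet_reachable_eq G
  exact ⟨X, hXG, fun a b hab hreach => hR _ hab (Sym2.mk_isDiag_iff.mpr (hf (hX _ _ hreach)))⟩

lemma exists_isMultiwayCutOn [Finite V] (hf : Function.Injective f)
    (hP : Setoid.IsPartition P) : ∃ X, IsMultiwayCutOn G f P X := by
  obtain ⟨X, hXG, hX⟩ := exists_finset_subset_edgeSet_reachable_eq G
  refine ⟨X, hXG, fun a b p hp q hq hap hbq hreach => ?_⟩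
  obtain rfl : a = b := hf (hX _ _ hreach)
  exact (hP.2 a).unique ⟨hp, hap⟩ ⟨hq, hbq⟩

lemma exists_isMulticutOn_card_eq [Finite V] (hf : Function.Injective f)
    (hR : ∀ r ∈ R, ¬ r.IsDiag) :
    ∃ X, IsMulticutOn G f R X ∧ X.card = minMulticutSizeOn G f R := by
  obtain ⟨X, hX⟩ := exists_isMulticutOn (G := G) hf hR
  exact Nat.sInf_mem (s := Finset.card '' {X | IsMulticutOn G f R X}) ⟨X.card, X, hX, rfl⟩

lemma exists_isMultiwayCutOn_card_eq [Finite V] (hf : Function.Injective f)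
    (hP : Setoid.IsPartition P) :
    ∃ X, IsMultiwayCutOn G f P X ∧ X.card = minMultiwayCutSizeOn G f P := by
  obtain ⟨X, hX⟩ := exists_isMultiwayCutOn (G := G) hf hP
  exact Nat.sInf_mem (s := Finset.card '' {X | IsMultiwayCutOn G f P X}) ⟨X.card, X, hX, rfl⟩

end Cuts

section CrossPairs

variable {G : SimpleGraph V} {f : τ → V} {P : Set (Set τ)} {X : Finset (Sym2 V)}

def crossPairs (P : Set (Set τ)) : Set (Sym2 τ) :=
  {r | ∃ a b : τ, ∃ p ∈ P, ∃ q ∈ P, p ≠ q ∧ a ∈ p ∧ b ∈ q ∧ r = s(a, b)}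

lemma not_isDiag_of_mem_crossPairs (hP : Setoid.IsPartition P) :
    ∀ r ∈ crossPairs P, ¬ r.IsDiag := by
  rintro _ ⟨a, b, p, hp, q, hq, hpq, hap, hbq, rfl⟩ hdiag
  obtain rfl : a = b := Sym2.mk_isDiag_iff.mp hdiag
  exact hpq ((hP.2 a).unique ⟨hp, hap⟩ ⟨hq, hbq⟩)

lemma isMulticutOn_crossPairs_iff :
    IsMulticutOn G f (crossPairs P) X ↔ IsMultiwayCutOn G f P X := by
  refine and_congr_right fun _ => ⟨fun hX a b p hp q hq hap hbq hreach => ?_, ?_⟩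
  · by_contra hpq
    exact hX a b ⟨a, b, p, hp, q, hq, hpq, hap, hbq, rfl⟩ hreach
  · rintro hX a' b' ⟨a, b, p, hp, q, hq, hpq, hap, hbq, hab⟩ hreach
    rcases Sym2.eq_iff.mp hab with ⟨rfl, rfl⟩ | ⟨rfl, rfl⟩
    · exact hpq (hX a' b' p hp q hq hap hbq hreach)
    · exact hpq (hX b' a' p hp q hq hap hbq hreach.symm)

lemma minMulticutSizeOn_crossPairs :
    minMulticutSizeOn G f (crossPairs P) = minMultiwayCutSizeOn G f P := by
  simp only [minMulticutSizeOn_eq_sInf, minMultiwayCutSizeOn_eq_sInf,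
    isMulticutOn_crossPairs_iff]

end CrossPairs

section SeparatingPartitions

variable {G : SimpleGraph V} {f : τ → V} {R : Set (Sym2 τ)} {P : Set (Set τ)}
  {X : Finset (Sym2 V)}

def SeparatesRequests (P : Set (Set τ)) (R : Set (Sym2 τ)) : Prop :=
  ∀ a b : τ, s(a, b) ∈ R → ∀ p ∈ P, a ∈ p → b ∉ p

def componentSetoid (G : SimpleGraph V) (f : τ → V) (X : Finset (Sym2 V)) : Setoid τ :=
  Setoid.comap f (G.deleteEdges ↑X).reachableSetoid

lemma isMultiwayCutOn_componentSetoid_classes (hXG : ↑X ⊆ G.edgeSet) :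
    IsMultiwayCutOn G f (componentSetoid G f X).classes X := by
  refine ⟨hXG, fun a b _ hp _ hq hap hbq hreach => Setoid.eq_of_mem_classes hp hap hq ?_⟩
  obtain ⟨c, rfl⟩ := hq
  exact (componentSetoid G f X).trans' hreach hbq

lemma IsMulticutOn.separatesRequests_componentSetoid_classes (hX : IsMulticutOn G f R X) :
    SeparatesRequests (componentSetoid G f X).classes R := fun a b hab p hp hap hbp =>
  hX.2 a b hab (((componentSetoid G f X).rel_iff_exists_classes).mpr ⟨p, hp, hap, hbp⟩)

lemma IsMultiwayCutOn.isMulticutOn (hP : Setoid.IsPartition P) (hPR : SeparatesRequests P R)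
    (hX : IsMultiwayCutOn G f P X) : IsMulticutOn G f R X := by
  refine ⟨hX.1, fun a b hab hreach => ?_⟩
  obtain ⟨p, ⟨hp, hap⟩, -⟩ := hP.2 a
  obtain ⟨q, ⟨hq, hbq⟩, -⟩ := hP.2 b
  obtain rfl := hX.2 a b p hp q hq hap hbq hreach
  exact hPR a b hab p hp hap hbq

theorem minMulticutSizeOn_eq_sInf_minMultiwayCutSizeOn [Finite V]
    (hf : Function.Injective f) (hR : ∀ r ∈ R, ¬ r.IsDiag) :
    minMulticutSizeOn G f R = sInf (minMultiwayCutSizeOn G f ''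
      {P | Setoid.IsPartition P ∧ SeparatesRequests P R}) := by
  obtain ⟨X, hX, hXcard⟩ := exists_isMulticutOn_card_eq hf hR
  have hcomp : (componentSetoid G f X).classes ∈
      {P | Setoid.IsPartition P ∧ SeparatesRequests P R} :=
    ⟨Setoid.isPartition_classes _, hX.separatesRequests_componentSetoid_classes⟩
  refine le_antisymm (le_csInf ⟨_, Set.mem_image_of_mem _ hcomp⟩ ?_) ?_
  · rintro _ ⟨P, ⟨hP, hPR⟩, rfl⟩
    obtain ⟨Y, hY, hYcard⟩ := exists_isMultiwayCutOn_card_eq (G := G) hf hP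
    exact hYcard ▸ minMulticutSizeOn_le (hY.isMulticutOn hP hPR)
  · calc sInf _ ≤ minMultiwayCutSizeOn G f (componentSetoid G f X).classes :=
          Nat.sInf_le (Set.mem_image_of_mem _ hcomp)
      _ ≤ X.card := minMultiwayCutSizeOn_le (isMultiwayCutOn_componentSetoid_classes hX.1)
      _ = minMulticutSizeOn G f R := hXcard

end SeparatingPartitions

theorem multicut_mimicking_iff_multiway_mimicking_general
    [Fintype V] [Fintype V']
    (G : SimpleGraph V) (G' : SimpleGraph V')
    (f : τ → V) (f' : τ → V')
    (hf : Function.Injective f) (hf' : Function.Injective f') :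
    (∀ R : Set (Sym2 τ), (∀ r ∈ R, ¬ r.IsDiag) →
        minMulticutSizeOn G f R = minMulticutSizeOn G' f' R) ↔
    (∀ P : Set (Set τ), Setoid.IsPartition P →
        minMultiwayCutSizeOn G f P = minMultiwayCutSizeOn G' f' P) := by
  constructor
  · intro h P hP
    rw [← minMulticutSizeOn_crossPairs, ← minMulticutSizeOn_crossPairs]
    exact h _ (not_isDiag_of_mem_crossPairs hP)
  · intro h R hR
    rw [minMulticutSizeOn_eq_sInf_minMultiwayCutSizeOn hf hR,
      minMulticutSizeOn_eq_sInf_minMultiwayCutSizeOn hf' hR]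
    exact congrArg sInf (Set.image_congr fun P hP => h P hP.1)

/-- `G'` is a multicut-mimicking network for `(G,T)` (the minimum
multicut size agrees for every set of cut requests over `T`) iff the minimum multiway
cut size agrees for every partition of `T`.  The common terminal set `T` is modelled
by a type `τ` embedded injectively in both graphs. -/
theorem multicut_mimicking_iff_multiway_mimicking
    [Fintype V] [Fintype V'] [Fintype τ]
    (G : SimpleGraph V) (G' : SimpleGraph V')
    (f : τ → V) (f' : τ → V')
    (hf : Function.Injective f) (hf' : Function.Injective f') :
    (∀ R : Set (Sym2 τ), (∀ r ∈ R, ¬ r.IsDiag) →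
        minMulticutSizeOn G f R = minMulticutSizeOn G' f' R) ↔
    (∀ P : Set (Set τ), Setoid.IsPartition P →
        minMultiwayCutSizeOn G f P = minMultiwayCutSizeOn G' f' P) :=
  multicut_mimicking_iff_multiway_mimicking_general G G' f f' hf hf'
end

section
/- Let (G,T) be a terminal network and let Z ⊆ E(G) be a cut-covering set for (G,T). Then Z is a 2-approximate multicut-covering set: for every partition 𝒯 of T there exists a multiway cut X' for 𝒯 in G with X' ⊆ Z and |X'| ≤ 2·|X|, where X is a minimum multiway cut for 𝒯 in G. -/
open Finset

variable {V : Type}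

/-- `Z` is a cut-covering set for `(G,T)`: for every bipartition `T = A ∪ B` there is
a minimum `(A,B)`-edge cut contained in `Z`. -/
def CutCovering [Fintype V] [DecidableEq V] (G : SimpleGraph V) (T : Finset V)
    (Z : Finset (Sym2 V)) : Prop :=
  ↑Z ⊆ G.edgeSet ∧ ∀ A B : Finset V, A ∪ B = T → Disjoint A B →
    ∃ X : Finset (Sym2 V), IsMinEdgeCut G A B X ∧ X ⊆ Z

/-!
For each part `p` of the partition, the cut-covering set contains a minimum cut separating the
terminals in `p` from the others; the union of these cuts is a multiway cut inside `Z`. To bound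
its size, let `S_p` be the set of vertices reachable in `G - X` from the terminals of `p`. The
edges of `X` leaving `S_p` separate `p` from the other terminals, so they are at least as many
as the chosen minimum cut. The sets `S_p` are pairwise disjoint, hence every edge of `X` leaves
at most two of them, and summing over `p` gives at most `2 |X|` edges.
-/

def Crosses (S : Set V) (e : Sym2 V) : Prop :=
  ∃ u v : V, e = s(u, v) ∧ u ∈ S ∧ v ∉ S

def reachableFrom (H : SimpleGraph V) (A : Set V) : Set V :=
  {w | ∃ a ∈ A, H.Reachable a w}

lemma Crosses.mem_or_mem {S : Set V} {a b : V} (h : Crosses S s(a, b)) : a ∈ S ∨ b ∈ S := by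
  obtain ⟨u, v, huv, hu, -⟩ := h
  rcases Sym2.eq_iff.mp huv with ⟨rfl, -⟩ | ⟨-, rfl⟩
  exacts [Or.inl hu, Or.inr hu]

open Classical in
lemma card_filter_crosses_le_two {ι : Type*} {I : Finset ι} {S : ι → Set V}
    (hS : (I : Set ι).PairwiseDisjoint S) (e : Sym2 V) :
    #{i ∈ I | Crosses (S i) e} ≤ 2 := by
  have hone : ∀ w, #{i ∈ I | w ∈ S i} ≤ 1 := fun w => card_le_one.mpr fun i hi j hj => by
    rw [mem_filter] at hi hj
    exact hS.elim_set hi.1 hj.1 w hi.2 hj.2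
  induction e using Sym2.ind with
  | _ a b =>
    calc #{i ∈ I | Crosses (S i) s(a, b)}
        ≤ #({i ∈ I | a ∈ S i} ∪ {i ∈ I | b ∈ S i}) := by
          refine card_le_card fun i hi => ?_
          rw [mem_filter] at hi
          simpa only [mem_union, mem_filter, ← and_or_left] using ⟨hi.1, hi.2.mem_or_mem⟩
      _ ≤ #{i ∈ I | a ∈ S i} + #{i ∈ I | b ∈ S i} := card_union_le _ _
      _ ≤ 2 := by linarith [hone a, hone b]

open Classical in
lemma sum_card_filter_crosses_le {ι : Type*} {I : Finset ι} {S : ι → Set V}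
    (hS : (I : Set ι).PairwiseDisjoint S) (X : Finset (Sym2 V)) :
    ∑ i ∈ I, #{e ∈ X | Crosses (S i) e} ≤ 2 * #X := by
  calc ∑ i ∈ I, #{e ∈ X | Crosses (S i) e}
      = ∑ e ∈ X, #{i ∈ I | Crosses (S i) e} :=
        sum_card_bipartiteAbove_eq_sum_card_bipartiteBelow (fun i e => Crosses (S i) e)
    _ ≤ #X • 2 := sum_le_card_nsmul _ _ _ fun e _ => card_filter_crosses_le_two hS e
    _ = 2 * #X := by rw [smul_eq_mul, mul_comm]

open Classical in
lemma IsEdgeCut.filter_crosses_reachableFrom {G : SimpleGraph V} {A B : Finset V}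
    {X : Finset (Sym2 V)} (hX : IsEdgeCut G A B X) :
    IsEdgeCut G A B {e ∈ X | Crosses (reachableFrom (G.deleteEdges X) A) e} := by
  set S := reachableFrom (G.deleteEdges X) A
  refine ⟨fun e he => hX.1 (mem_filter.mp he).1, fun a ha b hb ⟨w⟩ => ?_⟩
  have haS : a ∈ S := ⟨a, ha, .refl a⟩
  have hbS : b ∉ S := fun ⟨a', ha', hreach⟩ => hX.2 a' ha' b hb hreach
  obtain ⟨d, -, hd, hd'⟩ := w.exists_boundary_dart S haS hbS
  obtain ⟨hadj, hnot⟩ := (SimpleGraph.deleteEdges_adj ..).mp d.adj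
  by_cases hdX : s(d.fst, d.snd) ∈ X
  · exact hnot (mem_filter.mpr ⟨hdX, d.fst, d.snd, rfl, hd, hd'⟩)
  · obtain ⟨a', ha', hreach⟩ := hd
    exact hd' ⟨a', ha', hreach.trans ((SimpleGraph.deleteEdges_adj ..).mpr ⟨hadj, hdX⟩).reachable⟩

lemma IsPartitionOn.eq_of_mem {T : Set V} {P : Set (Set V)} (hP : IsPartitionOn T P)
    {p q : Set V} (hp : p ∈ P) (hq : q ∈ P) {t : V} (htp : t ∈ p) (htq : t ∈ q) : p = q :=
  (hP.2 t ((hP.1 p hp).2 htp)).unique ⟨hp, htp⟩ ⟨hq, htq⟩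

open Classical in
lemma isMultiwayCut_iff_forall_isEdgeCut {G : SimpleGraph V} {T : Finset V} {P : Set (Set V)}
    (hP : IsPartitionOn (↑T) P) {X : Finset (Sym2 V)} :
    IsMultiwayCut G P X ↔
      ↑X ⊆ G.edgeSet ∧ ∀ p ∈ P, IsEdgeCut G {t ∈ T | t ∈ p} {t ∈ T | t ∉ p} X := by
  refine ⟨fun hX => ⟨hX.1, fun p hp => ⟨hX.1, fun a ha b hb hab => ?_⟩⟩,
    fun hX => ⟨hX.1, fun u v p hp q hq hu hv huv => ?_⟩⟩
  · rw [mem_filter] at ha hb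
    obtain ⟨q, hq, -⟩ := hP.2 b hb.1
    exact hb.2 (hX.2 a b p hp q hq.1 ha.2 hq.2 hab ▸ hq.2)
  · by_contra hpq
    refine (hX.2 p hp).2 u ?_ v ?_ huv
    · exact mem_filter.mpr ⟨(hP.1 p hp).2 hu, hu⟩
    · exact mem_filter.mpr ⟨(hP.1 q hq).2 hv, fun hvp => hpq (hP.eq_of_mem hp hq hvp hv)⟩

lemma IsMultiwayCut.pairwiseDisjoint_reachableFrom {G : SimpleGraph V} {P : Set (Set V)}
    {X : Finset (Sym2 V)} (hX : IsMultiwayCut G P X) {A : Set V → Set V} (hA : ∀ p, A p ⊆ p) :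
    P.PairwiseDisjoint fun p => reachableFrom (G.deleteEdges X) (A p) := by
  refine fun p hp q hq hpq => Set.disjoint_left.mpr fun w ⟨a, ha, haw⟩ ⟨b, hb, hbw⟩ => hpq ?_
  exact hX.2 a b p hp q hq (hA p ha) (hA q hb) (haw.trans hbw.symm)

lemma IsEdgeCut.mono {G : SimpleGraph V} {A B : Finset V} {X Y : Finset (Sym2 V)}
    (hX : IsEdgeCut G A B X) (hXY : X ⊆ Y) (hY : ↑Y ⊆ G.edgeSet) : IsEdgeCut G A B Y :=
  ⟨hY, fun a ha b hb hab =>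
    hX.2 a ha b hb (hab.mono (SimpleGraph.deleteEdges_anti (coe_subset.mpr hXY)))⟩

theorem CutCovering.exists_isMultiwayCut_subset_card_le [Fintype V] [DecidableEq V]
    {G : SimpleGraph V} {T : Finset V} {Z : Finset (Sym2 V)} (hZ : CutCovering G T Z)
    {P : Set (Set V)} (hP : IsPartitionOn (↑T) P) {X : Finset (Sym2 V)}
    (hX : IsMultiwayCut G P X) :
    ∃ X' : Finset (Sym2 V), IsMultiwayCut G P X' ∧ X' ⊆ Z ∧ #X' ≤ 2 * #X := by
  classical
  choose f hf using fun p : Set V => hZ.2 {t ∈ T | t ∈ p} {t ∈ T | t ∉ p}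
    (filter_union_filter_not_eq _ T) (disjoint_filter_filter_not T T _)
  have hPfin : P.Finite := T.finite_toSet.finite_subsets.subset fun p hp => (hP.1 p hp).2
  set PF := hPfin.toFinset
  have hXcut := (isMultiwayCut_iff_forall_isEdgeCut hP).mp hX
  have hdisj := hX.pairwiseDisjoint_reachableFrom (A := fun p => ↑{t ∈ T | t ∈ p})
    fun p t ht => (mem_filter.mp ht).2
  have hsub : PF.biUnion f ⊆ Z := biUnion_subset.mpr fun p _ => (hf p).2
  have hcut : IsMultiwayCut G P (PF.biUnion f) :=
    (isMultiwayCut_iff_forall_isEdgeCut hP).mpr ⟨fun e he => hZ.1 (hsub he), fun p hp =>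
      (hf p).1.1.mono (subset_biUnion_of_mem f (hPfin.mem_toFinset.mpr hp))
        fun e he => hZ.1 (hsub he)⟩
  refine ⟨_, hcut, hsub, ?_⟩
  calc #(PF.biUnion f)
      ≤ ∑ p ∈ PF, #(f p) := card_biUnion_le
    _ ≤ ∑ p ∈ PF, #{e ∈ X | Crosses (reachableFrom (G.deleteEdges X) ↑{t ∈ T | t ∈ p}) e} :=
        sum_le_sum fun p hp =>
          (hf p).1.2 _ (hXcut.2 p (hPfin.mem_toFinset.mp hp)).filter_crosses_reachableFrom
    _ ≤ 2 * #X := sum_card_filter_crosses_le (hdisj.subset (by simp [PF])) X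

/-- A cut-covering set `Z` for `(G,T)` is a 2-approximate
multicut-covering set: for every partition `𝒯` of `T` and minimum multiway cut `X`
for `𝒯`, there is a multiway cut `X' ⊆ Z` for `𝒯` with `|X'| ≤ 2·|X|`. -/
theorem cutCovering_is_two_approx_multicutCovering [Fintype V] [DecidableEq V]
    (G : SimpleGraph V) (T : Finset V) (Z : Finset (Sym2 V))
    (hZ : CutCovering G T Z) :
    ∀ P : Set (Set V), IsPartitionOn (↑T) P →
      ∀ X : Finset (Sym2 V), IsMinMultiwayCut G P X →
        ∃ X' : Finset (Sym2 V), IsMultiwayCut G P X' ∧ X' ⊆ Z ∧ X'.card ≤ 2 * X.card :=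
  fun _ hP _ hX => hZ.exists_isMultiwayCut_subset_card_le hP hX.1
end

section
/- Let (G,T) be a terminal network, let S ⊆ V(G), and let (G_S, T(S)) be the recursive instance at S. Let Z_S ⊆ E(G_S) be a multicut-covering set for (G_S, T(S)), and let e ∈ E(G_S) ∖ Z_S. Then e is not essential for (G,T): for every set of cut requests R ⊆ {{u,v} : u,v ∈ T, u≠v} there exists a minimum multicut X for R in G with e ∉ X. -/
open Finset

variable {V : Type}

/-- `Z` is a multicut-covering set for `(G,T)`. -/
def MulticutCovering [Fintype V] (G : SimpleGraph V) (T : Finset V)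
    (Z : Finset (Sym2 V)) : Prop :=
  ↑Z ⊆ G.edgeSet ∧ ∀ R : Set (Sym2 V), CutRequests (↑T) R →
    ∃ X : Finset (Sym2 V), IsMinMulticut G R X ∧ X ⊆ Z

/-!
Take a minimum multicut `X` for `R` in `G` and let `R'` be the pairs of terminals of `T(S)`
that `X` separates. Then `X ∩ E(G_S)` is a multicut for `R'` in `G_S`, so the covering set
contains a minimum multicut `Y` for `R'` with `|Y| ≤ |X ∩ E(G_S)|`. The set
`(X ∖ E(G_S)) ∪ Y` is no larger than `X`, avoids `e`, and is still a multicut for `R`: a walk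
avoiding it splits into stretches in `G_S`, whose ends lie in `T(S)` and are therefore
connected in `G - X` since `Y` cuts `R'`, and edges outside `G_S`, which avoid `X`.
-/

theorem SimpleGraph.Reachable.reroute {K H G' : SimpleGraph V} {W : Set V}
    (hK : ∀ a b, K.Adj a b → H.Adj a b ∨ (a ∈ W ∧ b ∈ W ∧ G'.Adj a b))
    (hH : ∀ a ∈ W, ∀ b ∈ W, H.Reachable a b → G'.Reachable a b)
    {a b : V} (ha : a ∈ W) (hb : b ∈ W) (hab : K.Reachable a b) : G'.Reachable a b := by
  -- A `K`-walk ending in `W` is an `H`-path to some `c ∈ W` followed by a `G'`-path.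
  suffices key : ∀ {u v} (w : K.Walk u v), v ∈ W → ∃ c ∈ W, H.Reachable u c ∧ G'.Reachable c v by
    obtain ⟨w⟩ := hab
    obtain ⟨c, hc, hac, hcb⟩ := key w hb
    exact (hH a ha c hc hac).trans hcb
  intro u v w hv
  induction w with
  | nil => exact ⟨_, hv, .rfl, .rfl⟩
  | cons hadj _ ih =>
    obtain ⟨c, hc, hc₁, hc₂⟩ := ih hv
    rcases hK _ _ hadj with hH' | ⟨hu, hu', hG'⟩
    · exact ⟨c, hc, hH'.reachable.trans hc₁, hc₂⟩
    · exact ⟨_, hu, .rfl, hG'.reachable.trans ((hH _ hu' c hc hc₁).trans hc₂)⟩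

def separatedPairs (K : SimpleGraph V) (A : Set V) : Set (Sym2 V) :=
  {r | ∃ a ∈ A, ∃ b ∈ A, s(a, b) = r ∧ ¬ K.Reachable a b}

theorem cutRequests_separatedPairs (K : SimpleGraph V) (A : Set V) :
    CutRequests A (separatedPairs K A) := by
  rintro _ ⟨a, ha, b, hb, rfl, hab⟩
  refine ⟨fun hdiag => hab ?_, fun v hv => ?_⟩
  · rw [Sym2.mk_isDiag_iff.mp hdiag]
  · rcases Sym2.mem_iff.mp hv with rfl | rfl <;> assumption

theorem isMulticut_separatedPairs {H K : SimpleGraph V} {A : Set V} {X : Finset (Sym2 V)}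
    (hX : ↑X ⊆ H.edgeSet) (hle : H.deleteEdges ↑X ≤ K) :
    IsMulticut H (separatedPairs K A) X := by
  refine ⟨hX, fun u v ⟨a, _, b, _, huv, hab⟩ hreach => hab ?_⟩
  rcases Sym2.eq_iff.mp huv with ⟨rfl, rfl⟩ | ⟨rfl, rfl⟩
  · exact hreach.mono hle
  · exact (hreach.mono hle).symm

theorem reachable_of_isMulticut_separatedPairs {H K : SimpleGraph V} {A : Set V}
    {Y : Finset (Sym2 V)} (hY : IsMulticut H (separatedPairs K A) Y) {a b : V}
    (ha : a ∈ A) (hb : b ∈ A) (hab : (H.deleteEdges ↑Y).Reachable a b) : K.Reachable a b :=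
  by_contra fun hn => hY.2 a b ⟨a, ha, b, hb, rfl, hn⟩ hab

theorem exists_isMinMulticut [Finite V] (G : SimpleGraph V) {R : Set (Sym2 V)}
    (hR : ∀ r ∈ R, ¬ r.IsDiag) : ∃ X, IsMinMulticut G R X := by
  have hall : IsMulticut G R G.edgeSet.toFinite.toFinset := by
    refine ⟨by simp, fun u v huv hreach => hR _ huv ?_⟩
    rw [Set.Finite.coe_toFinset, SimpleGraph.deleteEdges_edgeSet, sdiff_self,
      SimpleGraph.reachable_bot] at hreach
    exact Sym2.mk_isDiag_iff.mpr hreach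
  obtain ⟨X, hX, hmin⟩ := (measure Finset.card).wf.has_min {X | IsMulticut G R X} ⟨_, hall⟩
  exact ⟨X, hX, fun Y hY => not_lt.mp (hmin Y hY)⟩

theorem IsMinMulticut.of_card_le {G : SimpleGraph V} {R : Set (Sym2 V)} {X Y : Finset (Sym2 V)}
    (hX : IsMinMulticut G R X) (hY : IsMulticut G R Y) (hcard : Y.card ≤ X.card) :
    IsMinMulticut G R Y :=
  ⟨hY, fun Z hZ => hcard.trans (hX.2 Z hZ)⟩

section RecursiveInstance

variable [Fintype V] [DecidableEq V] {G : SimpleGraph V} [DecidableRel G.Adj] {T S : Finset V}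

theorem mem_recTerminals_of_adj {a b : V} (hT : a ∈ S → a ∈ T) (hab : (recGraph G S).Adj a b) :
    a ∈ recTerminals G T S := by
  by_cases haS : a ∈ S
  · exact mem_union_left _ (mem_inter.mpr ⟨hT haS, haS⟩)
  · exact mem_union_right _
      (mem_filter.mpr ⟨mem_univ a, haS, b, hab.2.resolve_left haS, hab.1.symm⟩)

theorem IsMulticut.sdiff_union_recGraph {R : Set (Sym2 V)} {X Y : Finset (Sym2 V)}
    (hR : CutRequests (↑T) R) (hX : IsMulticut G R X)
    (hY : IsMulticut (recGraph G S) (separatedPairs (G.deleteEdges ↑X) ↑(recTerminals G T S)) Y) :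
    IsMulticut G R (X \ (recGraph G S).edgeFinset ∪ Y) := by
  set W : Set V := {v | v ∈ S → v ∈ T}
  have hsplit : ∀ a b, (G.deleteEdges ↑(X \ (recGraph G S).edgeFinset ∪ Y)).Adj a b →
      ((recGraph G S).deleteEdges ↑Y).Adj a b ∨
        (a ∈ W ∧ b ∈ W ∧ (G.deleteEdges ↑X).Adj a b) := by
    intro a b h
    obtain ⟨hadj, hnot⟩ := SimpleGraph.deleteEdges_adj.mp h
    simp only [mem_coe, mem_union, mem_sdiff, SimpleGraph.mem_edgeFinset, not_or, not_and,
      not_not] at hnot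
    by_cases hS : a ∈ S ∨ b ∈ S
    · exact .inl (SimpleGraph.deleteEdges_adj.mpr ⟨⟨hadj, hS⟩, hnot.2⟩)
    · push Not at hS
      exact .inr ⟨fun h => absurd h hS.1, fun h => absurd h hS.2,
        SimpleGraph.deleteEdges_adj.mpr ⟨hadj, fun hx => hS.1 ((hnot.1 hx).2.resolve_right hS.2)⟩⟩
  have hrecW : ∀ a ∈ W, ∀ b ∈ W, ((recGraph G S).deleteEdges ↑Y).Reachable a b →
      (G.deleteEdges ↑X).Reachable a b := by
    intro a ha b hb hab
    obtain rfl | hne := eq_or_ne a b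
    · rfl
    -- An end of a nontrivial `G_S`-walk lies in `S` or in `N(S)`.
    have hterm : ∀ {u v}, u ∈ W → ((recGraph G S).deleteEdges ↑Y).Walk u v → u ≠ v →
        u ∈ recTerminals G T S := by
      rintro u v hu (_ | ⟨hadj, _⟩) huv
      · exact absurd rfl huv
      · exact mem_recTerminals_of_adj hu (SimpleGraph.deleteEdges_le _ hadj)
    obtain ⟨w⟩ := hab
    exact reachable_of_isMulticut_separatedPairs hY (hterm ha w hne) (hterm hb w.reverse hne.symm)
      ⟨w⟩
  refine ⟨?_, fun u v huv hreach => hX.2 u v huv ?_⟩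
  · rw [coe_union, Set.union_subset_iff]
    exact ⟨(coe_subset.mpr sdiff_subset).trans hX.1,
      hY.1.trans (SimpleGraph.edgeSet_mono fun _ _ h => h.1)⟩
  · have hW : ∀ x ∈ s(u, v), x ∈ W := fun x hx _ => (hR _ huv).2 x hx
    exact hreach.reroute hsplit hrecW (hW u (Sym2.mem_mk_left u v)) (hW v (Sym2.mem_mk_right u v))

end RecursiveInstance

/-- If `Z_S` is a multicut-covering set for the recursive instance
`(G_S, T(S))` at `S` and `e ∈ E(G_S) ∖ Z_S`, then `e` is not essential for `(G,T)`:
for every set of cut requests `R` over `T` there is a minimum multicut avoiding `e`. -/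
theorem recursive_instance_nonessential [Fintype V] [DecidableEq V]
    (G : SimpleGraph V) [DecidableRel G.Adj] (T S : Finset V)
    (ZS : Finset (Sym2 V))
    (hZ : MulticutCovering (recGraph G S) (recTerminals G T S) ZS)
    (e : Sym2 V) (he : e ∈ (recGraph G S).edgeSet) (heZ : e ∉ ZS) :
    ∀ R : Set (Sym2 V), CutRequests (↑T) R →
      ∃ X : Finset (Sym2 V), IsMinMulticut G R X ∧ e ∉ X := by
  intro R hR
  set GS := recGraph G S
  obtain ⟨X, hX⟩ := exists_isMinMulticut G fun r hr => (hR r hr).1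
  obtain ⟨Y, hY, hYZ⟩ :=
    hZ.2 _ (cutRequests_separatedPairs (G.deleteEdges ↑X) ↑(recTerminals G T S))
  have hXS : IsMulticut GS (separatedPairs (G.deleteEdges ↑X) ↑(recTerminals G T S))
      (X ∩ GS.edgeFinset) := by
    refine isMulticut_separatedPairs (by simp) fun a b ⟨hab, hnot⟩ => ⟨hab.1, fun hx => hnot ?_⟩
    simpa [hab] using hx
  have hcard : (X \ GS.edgeFinset ∪ Y).card ≤ X.card :=
    calc (X \ GS.edgeFinset ∪ Y).card ≤ (X \ GS.edgeFinset).card + Y.card := card_union_le _ _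
      _ ≤ (X \ GS.edgeFinset).card + (X ∩ GS.edgeFinset).card :=
        Nat.add_le_add_left (hY.2 _ hXS) _
      _ = X.card := card_sdiff_add_card_inter X GS.edgeFinset
  refine ⟨_, hX.of_card_le (hX.1.sdiff_union_recGraph hR hY.1) hcard, ?_⟩
  simp only [mem_union, mem_sdiff, SimpleGraph.mem_edgeFinset, not_or, not_and, not_not]
  exact ⟨fun _ => he, fun h => heZ (hYZ h)⟩
end

section
/- Let (G,T) be a terminal network with k = cap_G(T), let 𝒯 be a partition of T, and let X be a minimum multiway cut for 𝒯 in G. Let V = V_1 ∪ … ∪ V_s be the partition of V into the vertex sets of the connected components of G−X, ordered so that cap_T(V_1) ≥ cap_T(V_2) ≥ … ≥ cap_T(V_s). Then for every i ∈ [s], cap_T(V_i) ≤ 3k/i. -/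
open Finset

variable {V : Type}

/-!
Every edge leaving a component of `G − X` lies in `X` and leaves at most two components, so
`∑ᵢ cap_T(Vᵢ) ≤ k + 2|X|`. The edges at terminals form a multiway cut with at most `k` edges,
so minimality gives `|X| ≤ k` and the sum is at most `3k`. As the capacities are non-increasing,
`i · cap_T(Vᵢ)` is bounded by the sum of the first `i` of them.
-/

section TerminalNetwork

variable [Fintype V] [DecidableEq V] (G : SimpleGraph V) [DecidableRel G.Adj]

lemma terminalEdges_isMultiwayCut (T : Finset V) {P : Set (Set V)}
    (hP : IsPartitionOn (↑T) P) : IsMultiwayCut G P (terminalEdges G T) := by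
  constructor
  · intro e he
    exact G.mem_edgeFinset.mp (Finset.mem_filter.mp he).1
  · intro u v p hp q hq hu hv huv
    have huT : u ∈ (T : Set V) := (hP.1 p hp).2 hu
    have hv_eq : u = v := by
      obtain ⟨_ | ⟨hadj, _⟩⟩ := huv
      · rfl
      · rw [SimpleGraph.deleteEdges_adj] at hadj
        exact absurd (Finset.mem_filter.mpr
          ⟨G.mem_edgeFinset.mpr hadj.1, u, huT, Sym2.mem_mk_left _ _⟩) hadj.2
    subst hv_eq
    obtain ⟨r, -, hr⟩ := hP.2 u huT
    exact (hr p ⟨hp, hu⟩).trans (hr q ⟨hq, hv⟩).symm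

lemma card_terminalEdges_le_capacity (T : Finset V) :
    (terminalEdges G T).card ≤ capacity G T :=
  calc (terminalEdges G T).card ≤ (T.biUnion fun t => G.incidenceFinset t).card := by
        refine Finset.card_le_card fun e he => ?_
        obtain ⟨heE, t, ht, hte⟩ := Finset.mem_filter.mp he
        exact Finset.mem_biUnion.mpr
          ⟨t, ht, (G.mem_incidenceFinset t e).mpr ⟨G.mem_edgeFinset.mp heE, hte⟩⟩
    _ ≤ ∑ t ∈ T, (G.incidenceFinset t).card := Finset.card_biUnion_le
    _ = capacity G T := Finset.sum_congr rfl fun t _ => G.card_incidenceFinset_eq_degree t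

lemma IsMinMultiwayCut.card_le_capacity {T : Finset V} {P : Set (Set V)}
    (hP : IsPartitionOn (↑T) P) {X : Finset (Sym2 V)} (hX : IsMinMultiwayCut G P X) :
    X.card ≤ capacity G T :=
  (hX.2 _ (terminalEdges_isMultiwayCut G T hP)).trans (card_terminalEdges_le_capacity G T)

lemma edgeBoundary_subset_of_closed {S : Finset V} {X : Finset (Sym2 V)}
    (hS : ∀ u v, u ∈ S → (G.deleteEdges ↑X).Adj u v → v ∈ S) :
    edgeBoundary G S ⊆ X := by
  intro e he
  obtain ⟨heE, u, v, rfl, hu, hv⟩ := Finset.mem_filter.mp he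
  by_contra hnot
  exact hv (hS u v hu (SimpleGraph.deleteEdges_adj.mpr ⟨G.mem_edgeFinset.mp heE, hnot⟩))

section Partition

variable {ι : Type} [Fintype ι] [DecidableEq ι] {Vc : ι → Finset V}

lemma sum_capacity_inter_eq (hcover : ∀ v, ∃! i, v ∈ Vc i) (T : Finset V) :
    ∑ i, capacity G (T ∩ Vc i) = capacity G T := by
  choose idx hidx using hcover
  have hfiber : ∀ i, T ∩ Vc i = T.filter (fun v => idx v = i) := fun i => by
    ext v
    simp only [Finset.mem_inter, Finset.mem_filter]
    exact and_congr_right fun _ => ⟨fun hv => ((hidx v).2 i hv).symm, fun h => h ▸ (hidx v).1⟩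
  simp only [capacity, hfiber]
  exact Finset.sum_fiberwise T idx _

lemma card_filter_mem_edgeBoundary_le_two (hcover : ∀ v, ∃! i, v ∈ Vc i) (e : Sym2 V) :
    (Finset.univ.filter fun i => e ∈ edgeBoundary G (Vc i)).card ≤ 2 := by
  induction e using Sym2.inductionOn with
  | hf u v =>
    obtain ⟨iu, -, hiu⟩ := hcover u
    obtain ⟨iv, -, hiv⟩ := hcover v
    calc _ ≤ ({iu, iv} : Finset ι).card := by
          refine Finset.card_le_card fun i hi => ?_
          obtain ⟨a, b, hab, ha, -⟩ := (Finset.mem_filter.mp (Finset.mem_filter.mp hi).2).2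
          rcases Sym2.eq_iff.mp hab with ⟨rfl, -⟩ | ⟨-, rfl⟩
          · simp [hiu i ha]
          · simp [hiv i ha]
      _ ≤ 2 := Finset.card_le_two

lemma sum_card_edgeBoundary_le (hcover : ∀ v, ∃! i, v ∈ Vc i) {X : Finset (Sym2 V)}
    (hboundary : ∀ i, edgeBoundary G (Vc i) ⊆ X) :
    ∑ i, (edgeBoundary G (Vc i)).card ≤ 2 * X.card := by
  have hcount := Finset.sum_card_bipartiteAbove_eq_sum_card_bipartiteBelow
    (s := Finset.univ) (t := X) (r := fun i e => e ∈ edgeBoundary G (Vc i))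
  simp only [Finset.bipartiteAbove, Finset.bipartiteBelow, Finset.filter_mem_eq_inter,
    Finset.inter_eq_right.mpr (hboundary _)] at hcount
  calc ∑ i, (edgeBoundary G (Vc i)).card
      = ∑ e ∈ X, (Finset.univ.filter fun i => e ∈ edgeBoundary G (Vc i)).card := hcount
    _ ≤ X.card * 2 := Finset.sum_le_card_nsmul _ _ _ fun e _ =>
        card_filter_mem_edgeBoundary_le_two G hcover e
    _ = 2 * X.card := Nat.mul_comm _ _

lemma sum_capT_le_capacity_add (hcover : ∀ v, ∃! i, v ∈ Vc i) (T : Finset V)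
    {X : Finset (Sym2 V)} (hboundary : ∀ i, edgeBoundary G (Vc i) ⊆ X) :
    ∑ i, capT G T (Vc i) ≤ capacity G T + 2 * X.card := by
  rw [← sum_capacity_inter_eq G hcover T]
  simp only [capT, Finset.sum_add_distrib]
  exact Nat.add_le_add_left (sum_card_edgeBoundary_le G hcover hboundary) _

end Partition

end TerminalNetwork

lemma Fin.succ_mul_le_sum_of_antitone {s : ℕ} {f : Fin s → ℕ} (hf : Antitone f) (i : Fin s) :
    ((i : ℕ) + 1) * f i ≤ ∑ j, f j :=
  calc ((i : ℕ) + 1) * f i = ∑ _j ∈ Finset.Iic i, f i := by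
        rw [Finset.sum_const, Fin.card_Iic, smul_eq_mul]
    _ ≤ ∑ j ∈ Finset.Iic i, f j := Finset.sum_le_sum fun j hj => hf (Finset.mem_Iic.mp hj)
    _ ≤ ∑ j, f j := Finset.sum_le_sum_of_subset (Finset.subset_univ _)

/-- Let `X` be a minimum multiway cut for a partition `𝒯` of `T`,
and let `V_1, …, V_s` enumerate the vertex sets of the connected components of
`G − X`, ordered so that `cap_T(V_i)` is non-increasing.  Then
`cap_T(V_i) ≤ 3k/i` for all `i`, i.e. `i · cap_T(V_i) ≤ 3k` (1-indexed). -/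
theorem component_capacity_decay [Fintype V] [DecidableEq V]
    (G : SimpleGraph V) [DecidableRel G.Adj] (T : Finset V)
    (P : Set (Set V)) (hP : IsPartitionOn (↑T) P)
    (X : Finset (Sym2 V)) (hX : IsMinMultiwayCut G P X)
    {s : ℕ} (Vc : Fin s → Finset V)
    (hcomp : ∀ i, ∃ v : V, ∀ u : V, u ∈ Vc i ↔ (G.deleteEdges ↑X).Reachable u v)
    (hcover : ∀ v : V, ∃! i, v ∈ Vc i)
    (hmono : ∀ i j : Fin s, i ≤ j → capT G T (Vc j) ≤ capT G T (Vc i)) :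
    ∀ i : Fin s, ((i : ℕ) + 1) * capT G T (Vc i) ≤ 3 * capacity G T := by
  have hboundary : ∀ i, edgeBoundary G (Vc i) ⊆ X := fun i => by
    obtain ⟨w, hw⟩ := hcomp i
    exact edgeBoundary_subset_of_closed G fun u v hu huv =>
      (hw v).mpr (huv.symm.reachable.trans ((hw u).mp hu))
  have hXcard := hX.card_le_capacity G hP
  intro i
  calc ((i : ℕ) + 1) * capT G T (Vc i) ≤ ∑ j, capT G T (Vc j) :=
        Fin.succ_mul_le_sum_of_antitone hmono i
    _ ≤ capacity G T + 2 * X.card := sum_capT_le_capacity_add G hcover T hboundary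
    _ ≤ 3 * capacity G T := by omega
end

section
/- Let M = (E, ℐ) be the disjoint union of c matroids M_1,…,M_c on pairwise disjoint ground sets E_1,…,E_c, all representable over a common field, where M_i has rank r_i. Let 𝒴 be a collection of c-element independent sets of M such that every Y ∈ 𝒴 contains exactly one element of each E_i. Then there exists a subfamily 𝒴̂ ⊆ 𝒴 with |𝒴̂| ≤ r_1·r_2·…·r_c that represents 𝒴 in M. -/
open Finset

variable {V : Type}

/-!
Encode a transversal `Y = {(i, g i)}` by the pure tensor `⨂ᵢ vᵢ (g i)` in `⨂ᵢ span (range vᵢ)`,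
a space of dimension `r₁ ⋯ r_c`, and keep a subfamily of `𝒴` whose tensors form a basis of the
span of all of them. `Y` extends an independent `X` exactly when there are linear forms `fᵢ`
vanishing on the `i`-th layer of `X` with `fᵢ (vᵢ (g i)) ≠ 0`, that is, when the product form
`⨂ᵢ fᵢ` does not vanish on the tensor of `Y`. A linear form that is nonzero on some tensor of the
family is nonzero on some basis element, which gives the representing member of the subfamily.
-/

open Module PiTensorProduct
open scoped TensorProduct

theorem Submodule.notMem_span_iff_exists_dual {K M : Type*} [Field K] [AddCommGroup M]
    [Module K M] {S : Set M} {x : M} :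
    x ∉ span K S ↔ ∃ f : Dual K M, S ⊆ LinearMap.ker f ∧ f x ≠ 0 := by
  refine ⟨fun hx => ?_, fun ⟨f, hS, hfx⟩ hx => hfx (span_le.2 hS hx)⟩
  obtain ⟨f, hfx, hmap⟩ := exists_dual_map_eq_bot_of_notMem hx inferInstance
  refine ⟨f, fun s hs => ?_, hfx⟩
  simpa [hmap] using mem_map_of_mem (f := f) (subset_span hs)

theorem exists_subset_card_le_finrank_forall_dual_ne_zero {K M ι : Type*} [Field K]
    [AddCommGroup M] [Module K M] [FiniteDimensional K M] (t : ι → M) (s : Finset ι) :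
    ∃ s' ⊆ s, #s' ≤ finrank K M ∧
      ∀ ℓ : Dual K M, (∃ y ∈ s, ℓ (t y) ≠ 0) → ∃ y ∈ s', ℓ (t y) ≠ 0 := by
  obtain ⟨b, hbs, -, hspan, hli⟩ :=
    exists_linearIndepOn_extension (linearIndepOn_empty K t) (Set.empty_subset (s : Set ι))
  lift b to Finset ι using s.finite_toSet.subset hbs
  refine ⟨b, coe_subset.1 hbs, ?_, fun ℓ ⟨y, hy, hℓy⟩ => ?_⟩
  · simpa using hli.fintype_card_le_finrank
  · by_contra! hb
    have hker : t '' b ⊆ LinearMap.ker ℓ := by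
      rintro _ ⟨z, hz, rfl⟩
      exact hb z hz
    exact hℓy (Submodule.span_le.2 hker (hspan (Set.mem_image_of_mem t hy)))

theorem finrank_piTensorProduct {K ι : Type*} [Field K] [Fintype ι] {M : ι → Type*}
    [∀ i, AddCommGroup (M i)] [∀ i, Module K (M i)] [∀ i, FiniteDimensional K (M i)] :
    finrank K (⨂[K] i, M i) = ∏ i, finrank K (M i) := by
  classical
  rw [finrank_eq_card_basis (Basis.piTensorProduct fun i => finBasis K (M i))]
  simp

theorem linearIndepOn_sigma_single_iff {K η : Type*} [Field K] [DecidableEq η]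
    {E : η → Type*} {M : η → Type*} [∀ i, AddCommGroup (M i)] [∀ i, Module K (M i)]
    (v : ∀ i, E i → M i) (s : Set (Σ i, E i)) :
    LinearIndepOn K (fun x => Pi.single x.1 (v x.1 x.2)) s ↔
      ∀ i, LinearIndepOn K (v i) (Sigma.mk i ⁻¹' s) := by
  refine ⟨fun h i => LinearIndepOn.of_comp (LinearMap.single K M i) ?_, fun h => ?_⟩
  · exact (h.mono (Set.image_preimage_subset _ s)).comp_of_image sigma_mk_injective.injOn
  · have hpi := Pi.linearIndependent_single (R := K) (fun i (e : Sigma.mk i ⁻¹' s) => v i e) h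
    refine hpi.comp (fun x : s => ⟨x.1.1, x.1.2, x.2⟩) ?_
    rintro ⟨⟨i, a⟩, ha⟩ ⟨⟨j, b⟩, hb⟩ hab
    obtain ⟨rfl, hab⟩ := Sigma.mk.inj hab
    cases hab
    rfl

theorem disjoint_and_linearIndepOn_union_range_sigma_iff {K η : Type*} [Field K]
    [DecidableEq η] {E : η → Type*} {M : η → Type*} [∀ i, AddCommGroup (M i)]
    [∀ i, Module K (M i)] (v : ∀ i, E i → M i) {s : Set (Σ i, E i)}
    (hs : LinearIndepOn K (fun x => Pi.single x.1 (v x.1 x.2)) s) (g : ∀ i, E i) :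
    (Disjoint s (Set.range fun i => (⟨i, g i⟩ : Σ i, E i)) ∧
        LinearIndepOn K (fun x => Pi.single x.1 (v x.1 x.2))
          (s ∪ Set.range fun i => (⟨i, g i⟩ : Σ i, E i))) ↔
      ∀ i, v i (g i) ∉ Submodule.span K (v i '' (Sigma.mk i ⁻¹' s)) := by
  have hrange : ∀ i, Sigma.mk i ⁻¹' (Set.range fun j => (⟨j, g j⟩ : Σ j, E j)) = {g i} := by
    intro i; ext e
    constructor
    · rintro ⟨j, hj⟩
      obtain ⟨rfl, h⟩ := Sigma.mk.inj hj
      exact (eq_of_heq h).symm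
    · rintro rfl
      exact ⟨i, rfl⟩
  rw [linearIndepOn_sigma_single_iff] at hs ⊢
  simp only [Set.disjoint_right, Set.forall_mem_range, Set.preimage_union, hrange,
    Set.union_singleton, ← forall_and]
  refine forall_congr' fun i => ⟨fun ⟨hg, hli⟩ => ?_, fun hspan => ?_⟩
  · exact ((linearIndepOn_insert (s := Sigma.mk i ⁻¹' s) hg).1 hli).2
  · have hg : g i ∉ Sigma.mk i ⁻¹' s := fun hg => hspan (Submodule.subset_span ⟨g i, hg, rfl⟩)
    exact ⟨hg, (linearIndepOn_insert hg).2 ⟨hs i, hspan⟩⟩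

theorem fIndep_iff_linearIndepOn {K M ι : Type} [Field K] [AddCommGroup M] [Module K M]
    (v : ι → M) (X : Finset ι) : FIndep K v X ↔ LinearIndepOn K v ↑X :=
  Iff.rfl

section Transversal

variable {η : Type*} [Fintype η] {E : η → Type*}

def transversal (g : ∀ i, E i) : Finset (Σ i, E i) :=
  univ.map ⟨fun i => ⟨i, g i⟩, fun _ _ h => congrArg Sigma.fst h⟩

theorem coe_transversal (g : ∀ i, E i) :
    (transversal g : Set (Σ i, E i)) = Set.range fun i => ⟨i, g i⟩ := by
  rw [transversal, coe_map, coe_univ, Set.image_univ]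
  rfl

theorem exists_eq_transversal [DecidableEq η] {Y : Finset (Σ i, E i)}
    (hY : ∀ i, #(Y.filter fun x => x.1 = i) = 1) : ∃ g, Y = transversal g := by
  have hlayer : ∀ i, ∃ e : E i, Y.filter (fun x => x.1 = i) = {⟨i, e⟩} := by
    intro i
    obtain ⟨⟨j, e⟩, h⟩ := card_eq_one.1 (hY i)
    have hj : (⟨j, e⟩ : Σ i, E i) ∈ Y.filter (fun x => x.1 = i) := h ▸ mem_singleton_self _
    obtain rfl := (mem_filter.1 hj).2
    exact ⟨e, h⟩
  choose g hg using hlayer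
  refine ⟨g, ext fun x => ?_⟩
  have hx := congrArg (x ∈ ·) (hg x.1)
  simp only [mem_filter, mem_singleton, and_true, eq_iff_iff] at hx
  rw [hx, ← mem_coe, coe_transversal]
  exact ⟨fun h => ⟨x.1, h.symm⟩, by rintro ⟨i, rfl⟩; rfl⟩

end Transversal

theorem disjoint_and_fIndep_union_transversal_iff {K η : Type} [Field K] [Fintype η]
    [DecidableEq η] {E M : η → Type} [∀ i, DecidableEq (E i)] [∀ i, AddCommGroup (M i)]
    [∀ i, Module K (M i)] (v : ∀ i, E i → M i) {X : Finset (Σ i, E i)}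
    (hX : FIndep K (fun x : Σ i, E i => Pi.single x.1 (v x.1 x.2)) X) (g : ∀ i, E i) :
    (Disjoint X (transversal g) ∧
        FIndep K (fun x : Σ i, E i => Pi.single x.1 (v x.1 x.2)) (X ∪ transversal g)) ↔
      ∀ i, v i (g i) ∉ Submodule.span K (v i '' (Sigma.mk i ⁻¹' ↑X)) := by
  rw [← disjoint_coe, fIndep_iff_linearIndepOn, coe_union, coe_transversal]
  exact disjoint_and_linearIndepOn_union_range_sigma_iff v hX g

/-- product form of the representative sets lemma.  Let `M` be the
disjoint union of `c` matroids `M_i` of rank `r_i`, all representable over a common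
field `F` (via vectors `v i : E i → W i`; the disjoint union is represented by the
block-diagonal vectors `x ↦ Pi.single x.1 (v x.1 x.2)` on the sigma type).  If every
`Y ∈ 𝒴` is a `c`-element independent set containing exactly one element of each
layer, then some subfamily `𝒴' ⊆ 𝒴` with `|𝒴'| ≤ r_1 ⋯ r_c` represents `𝒴`. -/
theorem representative_sets_product_form
    (F : Type) [Field F] (c : ℕ)
    (E : Fin c → Type) [∀ i, Fintype (E i)] [∀ i, DecidableEq (E i)]
    (W : Fin c → Type) [∀ i, AddCommGroup (W i)] [∀ i, Module F (W i)]
    (vv : ∀ i, E i → W i) (r : Fin c → ℕ)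
    (hrank : ∀ i, Module.finrank F (Submodule.span F (Set.range (vv i))) = r i)
    (𝒴 : Finset (Finset (Σ i, E i)))
    (h𝒴 : ∀ Y ∈ 𝒴, Y.card = c ∧
      FIndep F (fun x : Σ i, E i => Pi.single x.1 (vv x.1 x.2)) Y ∧
      ∀ i : Fin c, (Y.filter (fun x => x.1 = i)).card = 1) :
    ∃ 𝒴' ⊆ 𝒴, 𝒴'.card ≤ ∏ i, r i ∧
      ∀ X : Finset (Σ i, E i),
        FIndep F (fun x : Σ i, E i => Pi.single x.1 (vv x.1 x.2)) X →
        (∃ Y ∈ 𝒴, Disjoint X Y ∧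
          FIndep F (fun x : Σ i, E i => Pi.single x.1 (vv x.1 x.2)) (X ∪ Y)) →
        (∃ Y' ∈ 𝒴', Disjoint X Y' ∧
          FIndep F (fun x : Σ i, E i => Pi.single x.1 (vv x.1 x.2)) (X ∪ Y')) := by
  let U i := Submodule.span F (Set.range (vv i))
  have (i : Fin c) : FiniteDimensional F (U i) := .span_of_finite F (Set.finite_range _)
  let t (g : ∀ i, E i) : ⨂[F] i, U i := ⨂ₜ[F] i, ⟨vv i (g i), Submodule.subset_span ⟨g i, rfl⟩⟩
  obtain ⟨G, hG, hcard, hrep⟩ := exists_subset_card_le_finrank_forall_dual_ne_zero (K := F) t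
    (univ.filter fun g => transversal g ∈ 𝒴)
  refine ⟨G.image transversal, ?_, ?_, ?_⟩
  · exact image_subset_iff.2 fun g hg => (mem_filter.1 (hG hg)).2
  · refine card_image_le.trans (hcard.trans_eq ?_)
    rw [finrank_piTensorProduct]
    exact prod_congr rfl fun i _ => hrank i
  rintro X hX ⟨Y, hY, hXY⟩
  obtain ⟨g, rfl⟩ := exists_eq_transversal (h𝒴 Y hY).2.2
  rw [disjoint_and_fIndep_union_transversal_iff vv hX] at hXY
  choose f hfX hfg using fun i => Submodule.notMem_span_iff_exists_dual.1 (hXY i)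
  let ℓ := dualDistrib (⨂ₜ[F] i, (f i).comp (U i).subtype)
  have hℓ (g' : ∀ i, E i) : ℓ (t g') = ∏ i, f i (vv i (g' i)) := dualDistrib_apply _ _
  obtain ⟨g', hg', hℓg'⟩ := hrep ℓ ⟨g, mem_filter.2 ⟨mem_univ g, hY⟩,
    by rw [hℓ]; exact prod_ne_zero_iff.2 fun i _ => hfg i⟩
  refine ⟨transversal g', mem_image_of_mem _ hg',
    (disjoint_and_fIndep_union_transversal_iff vv hX g').2 fun i =>
      Submodule.notMem_span_iff_exists_dual.2 ⟨f i, hfX i, ?_⟩⟩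
  rw [hℓ] at hℓg'
  exact prod_ne_zero_iff.1 hℓg' i (mem_univ i)
end
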